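/- arXiv:2103.09175 — 5 statements merged into one kernel-verified Lean document; each statement's English description precedes it below -/
import Mathlib

section
/- Recursion for the determinant of the autocovariance matrix: for every integer m ≥ p+1, det(Γ_m) = σ² · det(Γ_{m−1}). -/
open Matrix Finset

/-!
Subtracting from the first row of `Γ_m` the combination `φ₁·row₂ + ⋯ + φ_p·row_{p+1}`
(available because `m ≥ p + 1`) does not change the determinant, and by the Yule–Walker
equations turns that row into `(σ², 0, …, 0)`. Expanding along it leaves `σ²` times the
minor obtained by deleting the first row and column, which by the Toeplitz structure is
`Γ_{m-1}`.
-/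

theorem Matrix.det_eq_mul_det_submatrix_succ_of_sum_smul_row_eq_single {R : Type*} [CommRing R]
    {n : ℕ} (A : Matrix (Fin (n + 1)) (Fin (n + 1)) R) (c : Fin (n + 1) → R) (hc : c 0 = 1)
    (a : R) (h : ∑ k, c k • A k = Pi.single 0 a) :
    A.det = a * (A.submatrix Fin.succ Fin.succ).det := by
  have hdet : (A.updateRow 0 (Pi.single 0 a)).det = A.det := by
    rw [← h, det_updateRow_sum, hc, one_smul]
  have hminor : (A.updateRow 0 (Pi.single 0 a)).submatrix Fin.succ Fin.succ =
      A.submatrix Fin.succ Fin.succ := by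
    ext i j
    simp
  rw [← hdet, det_succ_row_zero, Fintype.sum_eq_single 0 fun j hj => by simp [hj]]
  simp [hminor]

theorem Function.Even.apply_abs {α β : Type*} [AddGroup α] [LinearOrder α] {f : α → β}
    (hf : Function.Even f) (x : α) : f |x| = f x := by
  rcases abs_choice x with h | h
  · rw [h]
  · rw [h, hf]

section Autocovariance

variable {R : Type*}

def autocovMatrix (γ : ℤ → R) (m : ℕ) : Matrix (Fin m) (Fin m) R :=
  of fun i j => γ |(i : ℤ) - j|

theorem autocovMatrix_submatrix_succ (γ : ℤ → R) (n : ℕ) :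
    (autocovMatrix γ (n + 1)).submatrix Fin.succ Fin.succ = autocovMatrix γ n := by
  ext i j
  simp [autocovMatrix]

variable [CommRing R]

/-- Coefficients of the AR polynomial `1 - φ₁ z - ⋯ - φ_p z^p`. -/
def arPolynomialCoeff (φ : ℕ → R) (p k : ℕ) : R :=
  if k = 0 then 1 else if k ≤ p then -φ k else 0

theorem sum_range_arPolynomialCoeff_mul (φ : ℕ → R) {p n : ℕ} (hpn : p ≤ n) (f : ℕ → R) :
    ∑ k ∈ range (n + 1), arPolynomialCoeff φ p k * f k = f 0 - ∑ i ∈ Icc 1 p, φ i * f i := by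
  rw [← Nat.Ico_zero_eq_range, ← sum_Ico_consecutive _ (Nat.zero_le (p + 1)) (by omega),
    ← sum_Ico_consecutive _ zero_le_one (by omega : 1 ≤ p + 1), Ico_add_one_right_eq_Icc]
  have hhead : ∑ k ∈ Ico 0 1, arPolynomialCoeff φ p k * f k = f 0 := by
    simp [arPolynomialCoeff]
  have hmid : ∑ k ∈ Icc 1 p, arPolynomialCoeff φ p k * f k = -∑ i ∈ Icc 1 p, φ i * f i := by
    rw [← sum_neg_distrib]
    refine sum_congr rfl fun k hk => ?_
    rw [mem_Icc] at hk
    simp [arPolynomialCoeff, hk.2, show k ≠ 0 by omega]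
  have htail : ∑ k ∈ Ico (p + 1) (n + 1), arPolynomialCoeff φ p k * f k = 0 :=
    sum_eq_zero fun k hk => by
      rw [mem_Ico] at hk
      simp [arPolynomialCoeff, show k ≠ 0 by omega, show ¬k ≤ p by omega]
  rw [hhead, hmid, htail, add_zero, sub_eq_add_neg]

variable {p : ℕ} {φ : ℕ → R} {σ2 : R} {γ : ℤ → R}

theorem sub_sum_eq_ite_of_yuleWalker (hγ : Function.Even γ)
    (hYW0 : γ 0 = (∑ i ∈ Icc 1 p, φ i * γ (i : ℤ)) + σ2)
    (hYW : ∀ j : ℤ, 1 ≤ j → γ j = ∑ i ∈ Icc 1 p, φ i * γ (j - (i : ℤ))) (j : ℕ) :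
    γ j - ∑ i ∈ Icc 1 p, φ i * γ (j - i) = if j = 0 then σ2 else 0 := by
  split_ifs with hj
  · simp_rw [hj, Nat.cast_zero, zero_sub, hγ _]
    rw [hYW0, add_sub_cancel_left]
  · rw [← hYW j (by omega), sub_self]

theorem sum_arPolynomialCoeff_smul_autocovMatrix_row (hγ : Function.Even γ)
    (hYW0 : γ 0 = (∑ i ∈ Icc 1 p, φ i * γ (i : ℤ)) + σ2)
    (hYW : ∀ j : ℤ, 1 ≤ j → γ j = ∑ i ∈ Icc 1 p, φ i * γ (j - (i : ℤ)))
    {n : ℕ} (hpn : p ≤ n) :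
    ∑ k : Fin (n + 1), arPolynomialCoeff φ p k • autocovMatrix γ (n + 1) k = Pi.single 0 σ2 := by
  ext j
  have hcomm : ∀ i : ℕ, γ |(i : ℤ) - j| = γ (j - i) := fun i => by
    rw [hγ.apply_abs, ← hγ, neg_sub]
  simp only [Finset.sum_apply, Pi.smul_apply, autocovMatrix, of_apply, smul_eq_mul]
  rw [Fin.sum_univ_eq_sum_range (fun k => arPolynomialCoeff φ p k * γ |(k : ℤ) - j|),
    sum_range_arPolynomialCoeff_mul φ hpn]
  simp_rw [hcomm]
  rw [Nat.cast_zero, sub_zero, sub_sum_eq_ite_of_yuleWalker hγ hYW0 hYW, Pi.single_apply]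
  simp only [Fin.val_eq_zero_iff]

end Autocovariance

theorem stmt_3_general
    (p : ℕ)
    (φ : ℕ → ℝ)
    (σ2 : ℝ)
    (γ : ℤ → ℝ)
    (hsym : ∀ j : ℤ, γ (-j) = γ j)
    (hYW0 : γ 0 = (∑ i ∈ Finset.Icc 1 p, φ i * γ (i : ℤ)) + σ2)
    (hYW : ∀ j : ℤ, 1 ≤ j → γ j = ∑ i ∈ Finset.Icc 1 p, φ i * γ (j - (i : ℤ)))
    (Γ : (m : ℕ) → Matrix (Fin m) (Fin m) ℝ)
    (hΓ : ∀ m : ℕ, ∀ i j : Fin m, Γ m i j = γ |(i : ℤ) - (j : ℤ)|)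
    (m : ℕ) (hm : p + 1 ≤ m) :
    (Γ m).det = σ2 * (Γ (m - 1)).det := by
  obtain rfl : Γ = autocovMatrix γ := funext fun m => Matrix.ext (hΓ m)
  obtain ⟨n, rfl⟩ : ∃ n, m = n + 1 := ⟨m - 1, by omega⟩
  rw [Nat.add_sub_cancel, ← autocovMatrix_submatrix_succ γ n]
  exact det_eq_mul_det_submatrix_succ_of_sum_smul_row_eq_single _ _ (by simp [arPolynomialCoeff])
    σ2 (sum_arPolynomialCoeff_smul_autocovMatrix_row hsym hYW0 hYW (by omega))

/-- Context: AR(p) coefficients `φ`, white-noise variance `σ2`, autocovariance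
sequence `γ` satisfying the Yule–Walker equations, and the autocovariance
Toeplitz matrices `Γ m`, assumed positive definite for `m ≥ 1`. -/
theorem stmt_3
    (p : ℕ) (hp : 1 ≤ p)
    (φ : ℕ → ℝ)
    (σ2 : ℝ) (hσ : 0 < σ2)
    (γ : ℤ → ℝ)
    (hsym : ∀ j : ℤ, γ (-j) = γ j)
    (hYW0 : γ 0 = (∑ i ∈ Finset.Icc 1 p, φ i * γ (i : ℤ)) + σ2)
    (hYW : ∀ j : ℤ, 1 ≤ j → γ j = ∑ i ∈ Finset.Icc 1 p, φ i * γ (j - (i : ℤ)))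
    (Γ : (m : ℕ) → Matrix (Fin m) (Fin m) ℝ)
    (hΓ : ∀ m : ℕ, ∀ i j : Fin m, Γ m i j = γ |(i : ℤ) - (j : ℤ)|)
    (hpd : ∀ m : ℕ, 1 ≤ m → (Γ m).PosDef)
    (m : ℕ) (hm : p + 1 ≤ m) :
    (Γ m).det = σ2 * (Γ (m - 1)).det :=
  stmt_3_general p φ σ2 γ hsym hYW0 hYW Γ hΓ m hm
end

section
/- Initial condition for the nested lower right corner matrix: NLRC_{p,p+1}(1,1) = 1; equivalently, the (p+1, p+1) entry of Γ_{p+1}^{-1} equals 1/σ². -/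
/-!
With `a = (1, -φ₁, …, -φ_p)`, the Yule–Walker equations say exactly that the reversed vector
`v = (-φ_p, …, -φ₁, 1)` satisfies `Γ_{p+1} v = σ² e_{p+1}`. Inverting, `v = σ² Γ_{p+1}⁻¹ e_{p+1}`,
and reading off the last coordinate gives `1 = σ² (Γ_{p+1}⁻¹)_{p+1,p+1}`.
-/

open Matrix Finset

theorem Matrix.inv_apply_mul_eq_of_mulVec_eq_single {n R : Type*} [Fintype n] [DecidableEq n]
    [CommRing R] {A : Matrix n n R} (hA : IsUnit A) {v : n → R} {i : n} {c : R}
    (h : A *ᵥ v = Pi.single i c) (j : n) : A⁻¹ j i * c = v j := by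
  have hdet := (isUnit_iff_isUnit_det A).mp hA
  have hv : v = A⁻¹ *ᵥ Pi.single i c := by
    rw [← h, mulVec_mulVec, nonsing_inv_mul _ hdet, one_mulVec]
  rw [hv, mulVec_single]
  simp [mul_comm]

/-- The coefficients of the AR polynomial `1 - φ₁ z - ⋯ - φ_p z^p`. -/
def arCoeff (φ : ℕ → ℝ) (i : ℕ) : ℝ := if i = 0 then 1 else -φ i

theorem sum_range_arCoeff_mul (φ : ℕ → ℝ) (p : ℕ) (g : ℕ → ℝ) :
    ∑ i ∈ range (p + 1), arCoeff φ i * g i = g 0 - ∑ i ∈ Icc 1 p, φ i * g i := by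
  induction p with
  | zero => simp [arCoeff]
  | succ p ih =>
    rw [sum_range_succ, ih, sum_Icc_succ_top (by omega), arCoeff, if_neg (by omega)]
    ring

theorem yuleWalker_residual {p : ℕ} {φ : ℕ → ℝ} {σ2 : ℝ} {γ : ℤ → ℝ}
    (hsym : ∀ j : ℤ, γ (-j) = γ j)
    (hYW0 : γ 0 = (∑ i ∈ Icc 1 p, φ i * γ (i : ℤ)) + σ2)
    (hYW : ∀ j : ℤ, 1 ≤ j → γ j = ∑ i ∈ Icc 1 p, φ i * γ (j - (i : ℤ))) (l : ℕ) :
    ∑ i ∈ range (p + 1), arCoeff φ i * γ ((l : ℤ) - i) = if l = 0 then σ2 else 0 := by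
  rw [sum_range_arCoeff_mul, Nat.cast_zero, sub_zero]
  rcases Nat.eq_zero_or_pos l with rfl | hl
  · simp only [Nat.cast_zero, zero_sub, hsym, if_true]
    linarith
  · rw [if_neg hl.ne', hYW l (by omega), sub_self]

theorem toeplitz_mulVec_reverse_arCoeff {p : ℕ} {φ : ℕ → ℝ} {γ : ℤ → ℝ}
    (hsym : ∀ j : ℤ, γ (-j) = γ j) {A : Matrix (Fin (p + 1)) (Fin (p + 1)) ℝ}
    (hA : ∀ i j : Fin (p + 1), A i j = γ |(i : ℤ) - (j : ℤ)|) (j : Fin (p + 1)) :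
    (A *ᵥ fun k => arCoeff φ (p - k)) j
      = ∑ i ∈ range (p + 1), arCoeff φ i * γ (((p - j : ℕ) : ℤ) - i) := by
  have hγabs (x : ℤ) : γ |x| = γ x := by
    rcases abs_choice x with h | h <;> simp [h, hsym]
  simp only [mulVec, dotProduct, hA, hγabs]
  rw [Fin.sum_univ_eq_sum_range (fun k => γ ((j : ℤ) - k) * arCoeff φ (p - k)),
    ← sum_range_reflect]
  refine sum_congr rfl fun i hi => ?_
  have hi : i ≤ p := Nat.lt_succ_iff.mp (mem_range.mp hi)
  have hj : (j : ℕ) ≤ p := Nat.lt_succ_iff.mp j.isLt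
  rw [Nat.add_sub_cancel, Nat.sub_sub_self hi, mul_comm, ← hsym]
  push_cast [hi, hj]
  ring_nf

/-- Context: AR(p) coefficients `φ`, white-noise variance `σ2`, autocovariance
sequence `γ` satisfying the Yule–Walker equations, and the autocovariance
Toeplitz matrices `Γ m`, assumed positive definite for `m ≥ 1`. -/
theorem stmt_5
    (p : ℕ)
    (φ : ℕ → ℝ)
    (σ2 : ℝ)
    (γ : ℤ → ℝ)
    (hsym : ∀ j : ℤ, γ (-j) = γ j)
    (hYW0 : γ 0 = (∑ i ∈ Finset.Icc 1 p, φ i * γ (i : ℤ)) + σ2)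
    (hYW : ∀ j : ℤ, 1 ≤ j → γ j = ∑ i ∈ Finset.Icc 1 p, φ i * γ (j - (i : ℤ)))
    (Γ : (m : ℕ) → Matrix (Fin m) (Fin m) ℝ)
    (hΓ : ∀ m : ℕ, ∀ i j : Fin m, Γ m i j = γ |(i : ℤ) - (j : ℤ)|)
    (hpd : ∀ m : ℕ, 1 ≤ m → (Γ m).PosDef)
    :
    σ2 * (Γ (p + 1))⁻¹ ⟨p, by omega⟩ ⟨p, by omega⟩ = 1 ∧
    (Γ (p + 1))⁻¹ ⟨p, by omega⟩ ⟨p, by omega⟩ = 1 / σ2 := by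
  have hres : Γ (p + 1) *ᵥ (fun k => arCoeff φ (p - k)) = Pi.single (Fin.last p) σ2 := by
    funext j
    rw [toeplitz_mulVec_reverse_arCoeff hsym (hΓ (p + 1)), yuleWalker_residual hsym hYW0 hYW,
      Pi.single_apply]
    exact if_congr (by rw [Fin.ext_iff, Fin.val_last]; omega) rfl rfl
  have hentry : (Γ (p + 1))⁻¹ (Fin.last p) (Fin.last p) * σ2 = 1 := by
    rw [inv_apply_mul_eq_of_mulVec_eq_single (hpd (p + 1) p.succ_pos).isUnit hres, Fin.val_last,
      Nat.sub_self, arCoeff, if_pos rfl]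
  refine ⟨by rwa [mul_comm], ?_⟩
  rw [eq_div_iff (right_ne_zero_of_mul_eq_one hentry)]
  exact hentry
end

section
/- Band structure of NLRC: for every integer m ≥ p+1 and all indices 1 ≤ i, j ≤ m−p with |i − j| > p, NLRC_{p,m}(i,j) = 0. -/
/-!
Let `L` be the lower unitriangular Toeplitz matrix of the filter `1 - φ₁B - ⋯ - φ_pBᵖ`. The
Yule–Walker equations say that every row `s ≥ p` of `D = L Γ_m Lᵀ` is `σ² e_s`, so the same row
of `σ² D⁻¹` is `e_s`. Since `Γ_m⁻¹ = Lᵀ D⁻¹ L` and column `k ≥ p` of `L` is supported on rows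
`s ≥ k`, this gives `σ² Γ_m⁻¹ k l = ∑ s, L s k * L s l` for `k ≥ p`. Each column of `L` is
supported on `p + 1` consecutive rows, so the sum vanishes once `|k - l| > p`.
-/

open Matrix Finset

namespace Matrix

variable {n R : Type*} [Fintype n] [DecidableEq n] [CommRing R]

theorem inv_eq_mul_inv_mul_mul (A : Matrix n n R) {M N : Matrix n n R} (hM : IsUnit M.det)
    (hN : IsUnit N.det) : A⁻¹ = N * (M * A * N)⁻¹ * M := by
  rw [mul_inv_rev, mul_inv_rev, ← mul_assoc, ← mul_assoc, mul_nonsing_inv _ hN, one_mul,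
    mul_assoc, nonsing_inv_mul _ hM, mul_one]

theorem smul_inv_apply_of_row_eq {A : Matrix n n R} (hA : IsUnit A.det) {c : R} {s : n}
    (hrow : ∀ u, A s u = c * (1 : Matrix n n R) s u) (t : n) :
    (c • A⁻¹) s t = (1 : Matrix n n R) s t := by
  rw [← mul_nonsing_inv A hA, smul_apply, smul_eq_mul, mul_apply]
  simp only [hrow, mul_assoc, ← Finset.mul_sum, ← mul_apply, Matrix.one_mul]

theorem mul_apply_eq_of_rows_eq_one {A E : Matrix n n R} {k : n}
    (h : ∀ s, A k s ≠ 0 → ∀ t, E s t = (1 : Matrix n n R) s t) (t : n) :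
    (A * E) k t = A k t := by
  conv_rhs => rw [← Matrix.mul_one A]
  simp only [mul_apply]
  refine Finset.sum_congr rfl fun s _ => ?_
  by_cases hs : A k s = 0
  · simp [hs]
  · rw [h s hs]

end Matrix

theorem sum_fin_mul_eq_sum_range {R : Type*} [Semiring R] {p m s : ℕ} (hps : p ≤ s) (hsm : s < m)
    (f g : ℤ → R) (hf : ∀ d, f d ≠ 0 → 0 ≤ d ∧ d ≤ p) :
    ∑ b : Fin m, f (s - b) * g b = ∑ d ∈ range (p + 1), f d * g (s - d) := by
  have hf' : ∀ d : ℤ, (d < 0 ∨ p < d) → f d = 0 := fun d hd => by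
    by_contra h; have := hf d h; omega
  rw [Fin.sum_univ_eq_sum_range (fun b : ℕ => f (s - b) * g b)]
  rw [← sum_subset (range_subset_range.2 (show s + 1 ≤ m by omega)), ← sum_range_reflect]
  · rw [← sum_subset (range_subset_range.2 (show p + 1 ≤ s + 1 by omega))]
    · refine sum_congr rfl fun d hd => ?_
      have : d ≤ s := by rw [mem_range] at hd; omega
      push_cast [Nat.sub_sub, this]
      ring_nf
    · intro d hd hdp
      rw [mem_range] at hd hdp
      rw [hf' _ (by omega), zero_mul]
  · intro b _ hb
    rw [mem_range] at hb
    rw [hf' _ (by omega), zero_mul]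

structure IsYuleWalker (p : ℕ) (φ : ℕ → ℝ) (σ2 : ℝ) (γ : ℤ → ℝ) : Prop where
  neg_apply : ∀ j : ℤ, γ (-j) = γ j
  apply_zero : γ 0 = (∑ i ∈ Icc 1 p, φ i * γ (i : ℤ)) + σ2
  apply_of_pos : ∀ j : ℤ, 1 ≤ j → γ j = ∑ i ∈ Icc 1 p, φ i * γ (j - (i : ℤ))

noncomputable def arFilter (p : ℕ) (φ : ℕ → ℝ) (d : ℤ) : ℝ :=
  if d = 0 then 1 else if 0 < d ∧ d ≤ p then -φ d.toNat else 0

section ARFilter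

variable {p : ℕ} {φ : ℕ → ℝ}

theorem arFilter_zero : arFilter p φ 0 = 1 := if_pos rfl

theorem nonneg_and_le_of_arFilter_ne_zero {d : ℤ} (h : arFilter p φ d ≠ 0) : 0 ≤ d ∧ d ≤ p := by
  unfold arFilter at h
  split_ifs at h with h0 h1 <;> first | omega | exact absurd rfl h

theorem sum_range_arFilter_mul (g : ℤ → ℝ) :
    ∑ d ∈ range (p + 1), arFilter p φ d * g d = g 0 - ∑ i ∈ Icc 1 p, φ i * g i := by
  rw [range_eq_Ico, sum_eq_sum_Ico_succ_bot (Nat.succ_pos p), zero_add, Nat.succ_eq_add_one,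
    Ico_add_one_right_eq_Icc, Nat.cast_zero, arFilter_zero, one_mul, sub_eq_add_neg,
    ← sum_neg_distrib]
  congr 1
  refine sum_congr rfl fun i hi => ?_
  simp only [mem_Icc] at hi
  rw [arFilter, if_neg (by omega), if_pos (by omega), Int.toNat_natCast, neg_mul]

end ARFilter

noncomputable def arFilterMatrix (p : ℕ) (φ : ℕ → ℝ) (m : ℕ) : Matrix (Fin m) (Fin m) ℝ :=
  of fun t b => arFilter p φ ((t : ℤ) - b)

section ARFilterMatrix

variable {p : ℕ} {φ : ℕ → ℝ} {m : ℕ}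

theorem arFilterMatrix_apply (t b : Fin m) :
    arFilterMatrix p φ m t b = arFilter p φ ((t : ℤ) - b) := rfl

theorem le_of_arFilterMatrix_apply_ne_zero {t b : Fin m} (h : arFilterMatrix p φ m t b ≠ 0) :
    b ≤ t ∧ (t : ℤ) ≤ b + p := by
  have := nonneg_and_le_of_arFilter_ne_zero h
  exact ⟨Fin.le_iff_val_le_val.2 (by omega), by omega⟩

theorem arFilterMatrix_isLowerTriangular : (arFilterMatrix p φ m).IsLowerTriangular := by
  intro t b htb
  by_contra h
  exact absurd (le_of_arFilterMatrix_apply_ne_zero h).1 (not_le.2 htb)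

theorem det_arFilterMatrix : (arFilterMatrix p φ m).det = 1 := by
  rw [det_of_isLowerTriangular _ arFilterMatrix_isLowerTriangular]
  exact prod_eq_one fun t _ => by rw [arFilterMatrix_apply, sub_self, arFilter_zero]

theorem arFilterMatrix_apply_of_le {t s : Fin m} (hts : t ≤ s) :
    arFilterMatrix p φ m t s = if s = t then 1 else 0 := by
  split_ifs with h
  · rw [h, arFilterMatrix_apply, sub_self, arFilter_zero]
  · exact arFilterMatrix_isLowerTriangular (show t < s from lt_of_le_of_ne hts fun e => h e.symm)

end ARFilterMatrix

namespace IsYuleWalker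

variable {p : ℕ} {φ : ℕ → ℝ} {σ2 : ℝ} {γ : ℤ → ℝ}

theorem apply_abs (hγ : IsYuleWalker p φ σ2 γ) (j : ℤ) : γ |j| = γ j := by
  rcases abs_choice j with h | h <;> simp only [h, hγ.neg_apply]

theorem sum_arFilter_mul (hγ : IsYuleWalker p φ σ2 γ) {n : ℤ} (hn : 0 ≤ n) :
    ∑ d ∈ range (p + 1), arFilter p φ d * γ (n - d) = if n = 0 then σ2 else 0 := by
  rw [sum_range_arFilter_mul (fun d => γ (n - d)), sub_zero]
  split_ifs with h
  · subst h
    simp only [zero_sub, hγ.neg_apply]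
    linarith [hγ.apply_zero]
  · rw [hγ.apply_of_pos n (by omega), sub_self]

variable {m : ℕ} {Γ : Matrix (Fin m) (Fin m) ℝ}

theorem arFilterMatrix_mul_apply (hγ : IsYuleWalker p φ σ2 γ)
    (hΓ : ∀ i j : Fin m, Γ i j = γ |(i : ℤ) - j|) {s a : Fin m} (hs : p ≤ (s : ℕ)) (has : a ≤ s) :
    (arFilterMatrix p φ m * Γ) s a = if s = a then σ2 else 0 := by
  simp only [mul_apply, arFilterMatrix_apply, hΓ, hγ.apply_abs]
  rw [sum_fin_mul_eq_sum_range hs s.isLt _ (fun b => γ (b - a))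
    fun _ => nonneg_and_le_of_arFilter_ne_zero]
  have has' : (a : ℕ) ≤ s := has
  simp only [sub_right_comm _ _ (a : ℤ)]
  rw [hγ.sum_arFilter_mul (by omega)]
  simp only [sub_eq_zero, Nat.cast_inj, Fin.val_inj]

theorem arFilterMatrix_mul_mul_transpose_apply (hγ : IsYuleWalker p φ σ2 γ)
    (hΓ : ∀ i j : Fin m, Γ i j = γ |(i : ℤ) - j|) {s : Fin m} (hs : p ≤ (s : ℕ)) (t : Fin m) :
    (arFilterMatrix p φ m * Γ * (arFilterMatrix p φ m)ᵀ) s t = if s = t then σ2 else 0 := by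
  have lower : ∀ s t : Fin m, p ≤ (s : ℕ) → t ≤ s →
      (arFilterMatrix p φ m * Γ * (arFilterMatrix p φ m)ᵀ) s t = if s = t then σ2 else 0 := by
    intro s t hs hts
    have term : ∀ a, (arFilterMatrix p φ m * Γ) s a * arFilterMatrix p φ m t a
        = (if s = a then σ2 else 0) * arFilterMatrix p φ m t a := by
      intro a
      rcases le_or_gt a s with has | hsa
      · rw [hγ.arFilterMatrix_mul_apply hΓ hs has]
      · rw [arFilterMatrix_isLowerTriangular (show t < a from lt_of_le_of_lt hts hsa), mul_zero,
          mul_zero]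
    rw [mul_apply]
    simp only [transpose_apply, term, ite_mul, zero_mul, sum_ite_eq, mem_univ, if_true,
      arFilterMatrix_apply_of_le hts, mul_ite, mul_one, mul_zero]
  have hΓt : Γᵀ = Γ := by
    ext i j
    rw [transpose_apply, hΓ, hΓ, abs_sub_comm]
  rcases le_total t s with hts | hst
  · exact lower s t hs hts
  · rw [← transpose_apply (arFilterMatrix p φ m * Γ * _), transpose_mul, transpose_mul,
      transpose_transpose, hΓt, ← mul_assoc, lower t s (hs.trans hst) hst]
    simp only [eq_comm]

theorem mul_inv_apply_eq_sum_arFilterMatrix_mul (hγ : IsYuleWalker p φ σ2 γ)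
    (hΓ : ∀ i j : Fin m, Γ i j = γ |(i : ℤ) - j|) (hdet : IsUnit Γ.det) {k : Fin m}
    (hk : p ≤ (k : ℕ)) (l : Fin m) :
    σ2 * Γ⁻¹ k l = ∑ s, arFilterMatrix p φ m s k * arFilterMatrix p φ m s l := by
  have hL : IsUnit (arFilterMatrix p φ m).det := by rw [det_arFilterMatrix]; exact isUnit_one
  have hLt : IsUnit (arFilterMatrix p φ m)ᵀ.det := by rw [det_transpose]; exact hL
  have hD : IsUnit (arFilterMatrix p φ m * Γ * (arFilterMatrix p φ m)ᵀ).det := by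
    rwa [det_mul, det_mul, det_transpose, det_arFilterMatrix, one_mul, mul_one]
  have rows : ∀ s, (arFilterMatrix p φ m)ᵀ k s ≠ 0 → ∀ t,
      (σ2 • (arFilterMatrix p φ m * Γ * (arFilterMatrix p φ m)ᵀ)⁻¹) s t
        = (1 : Matrix (Fin m) (Fin m) ℝ) s t := by
    intro s hs
    have hps : p ≤ (s : ℕ) := hk.trans (le_of_arFilterMatrix_apply_ne_zero hs).1
    refine smul_inv_apply_of_row_eq hD fun u => ?_
    rw [hγ.arFilterMatrix_mul_mul_transpose_apply hΓ hps u, one_apply, mul_ite, mul_one, mul_zero]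
  rw [inv_eq_mul_inv_mul_mul Γ hL hLt, ← smul_eq_mul, ← Matrix.smul_apply, ← Matrix.smul_mul,
    ← Matrix.mul_smul, mul_apply]
  simp only [mul_apply_eq_of_rows_eq_one rows, transpose_apply]

end IsYuleWalker

theorem sum_arFilterMatrix_mul_eq_zero {p : ℕ} {φ : ℕ → ℝ} {m : ℕ} {k l : Fin m}
    (hkl : (p : ℤ) < |(k : ℤ) - l|) :
    ∑ s, arFilterMatrix p φ m s k * arFilterMatrix p φ m s l = 0 := by
  refine sum_eq_zero fun s _ => ?_
  by_contra h
  obtain ⟨hk, hl⟩ := mul_ne_zero_iff.1 h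
  have hks := le_of_arFilterMatrix_apply_ne_zero hk
  have hls := le_of_arFilterMatrix_apply_ne_zero hl
  rw [Fin.le_iff_val_le_val] at hks hls
  exact hkl.not_ge (abs_le.2 ⟨by omega, by omega⟩)

/-- Context: AR(p) coefficients `φ`, white-noise variance `σ2`, autocovariance
sequence `γ` satisfying the Yule–Walker equations, and the autocovariance
Toeplitz matrices `Γ m`, assumed positive definite for `m ≥ 1`. -/
theorem stmt_12
    (p : ℕ)
    (φ : ℕ → ℝ)
    (σ2 : ℝ)
    (γ : ℤ → ℝ)
    (hsym : ∀ j : ℤ, γ (-j) = γ j)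
    (hYW0 : γ 0 = (∑ i ∈ Finset.Icc 1 p, φ i * γ (i : ℤ)) + σ2)
    (hYW : ∀ j : ℤ, 1 ≤ j → γ j = ∑ i ∈ Finset.Icc 1 p, φ i * γ (j - (i : ℤ)))
    (Γ : (m : ℕ) → Matrix (Fin m) (Fin m) ℝ)
    (hΓ : ∀ m : ℕ, ∀ i j : Fin m, Γ m i j = γ |(i : ℤ) - (j : ℤ)|)
    (hpd : ∀ m : ℕ, 1 ≤ m → (Γ m).PosDef)
    (m : ℕ) (i j : ℕ) (hi1 : 1 ≤ i) (hi2 : i ≤ m - p)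
    (hj1 : 1 ≤ j) (hj2 : j ≤ m - p) (hij : (p : ℤ) < |(i : ℤ) - (j : ℤ)|) :
    σ2 * (Γ m)⁻¹ ⟨p + i - 1, by omega⟩ ⟨p + j - 1, by omega⟩ = 0 := by
  have hγ : IsYuleWalker p φ σ2 γ := ⟨hsym, hYW0, hYW⟩
  have hdet : IsUnit (Γ m).det := isUnit_iff_ne_zero.2 (hpd m (by omega)).det_pos.ne'
  rw [hγ.mul_inv_apply_eq_sum_arFilterMatrix_mul (hΓ m) hdet (show p ≤ p + i - 1 by omega)]
  refine sum_arFilterMatrix_mul_eq_zero ?_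
  have hdiff : ((p + i - 1 : ℕ) : ℤ) - (p + j - 1 : ℕ) = i - j := by omega
  simpa only [hdiff] using hij
end

section
/- Adjugate recursion in the non-overlapping regime: for every integer m ≥ 2p+2 and every index 1 ≤ i ≤ m−p−1, adj(Γ_m)(p+i, p+1) = σ² · adj(Γ_{m−1})(p+i, p+1), where adj denotes the adjugate (transpose of the cofactor matrix). -/
/-!
Replace row `p + 1` of `Γ_m` by the unit vector `e_{p+i}`; the determinant of the result is the
adjugate entry. Since `m - p > p + 1`, rows `m - p, …, m` of this matrix are still rows of `Γ_m`,
and by the Yule–Walker equations the last row minus `∑ φ_k · (row m - k)` is `σ² e_m`. This row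
operation does not change the determinant, and expanding along the new last row leaves `σ²` times
the leading `(m-1) × (m-1)` minor, which is `Γ_{m-1}` with row `p + 1` replaced by `e_{p+i}`.
-/

open Matrix Finset

namespace Matrix

variable {R : Type*} [CommRing R]

theorem det_updateRow_add_sum_smul {n ι : Type*} [Fintype n] [DecidableEq n]
    (A : Matrix n n R) (j : n) (t : Finset ι) (g : ι → n) (hg : ∀ k ∈ t, g k ≠ j)
    (c : ι → R) : (A.updateRow j (A j + ∑ k ∈ t, c k • A (g k))).det = A.det := by
  classical
  induction t using Finset.induction_on with
  | empty => rw [sum_empty, add_zero, updateRow_eq_self]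
  | insert k t hk ih =>
    rw [sum_insert hk, add_left_comm, det_updateRow_add, det_updateRow_smul,
      det_updateRow_eq_zero (hg k (mem_insert_self k t)), mul_zero, zero_add,
      ih fun l hl => hg l (mem_insert_of_mem hl)]

theorem det_eq_mul_det_submatrix_castSucc {n : ℕ} {ι : Type*}
    (A : Matrix (Fin (n + 1)) (Fin (n + 1)) R) (t : Finset ι) (g : ι → Fin (n + 1))
    (hg : ∀ k ∈ t, g k ≠ Fin.last n) (c : ι → R) (a : R)
    (h : A (Fin.last n) + ∑ k ∈ t, c k • A (g k) = a • Pi.single (Fin.last n) 1) :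
    A.det = a * (A.submatrix Fin.castSucc Fin.castSucc).det := by
  rw [← det_updateRow_add_sum_smul A _ t g hg c, h, det_updateRow_smul, ← adjugate_apply,
    adjugate_fin_succ_eq_det_submatrix, Fin.succAbove_last, ← two_mul, pow_mul]
  simp

end Matrix

section YuleWalker

variable {p : ℕ} {φ : ℕ → ℝ} {σ2 : ℝ} {γ : ℤ → ℝ}

theorem yuleWalker_sub_sum (hsym : ∀ j : ℤ, γ (-j) = γ j)
    (hYW0 : γ 0 = (∑ i ∈ Icc 1 p, φ i * γ (i : ℤ)) + σ2)
    (hYW : ∀ j : ℤ, 1 ≤ j → γ j = ∑ i ∈ Icc 1 p, φ i * γ (j - (i : ℤ)))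
    {d : ℤ} (hd : 0 ≤ d) :
    γ d - ∑ k ∈ Icc 1 p, φ k * γ (d - k) = if d = 0 then σ2 else 0 := by
  split_ifs with h0
  · simp only [h0, zero_sub, hsym, hYW0, add_sub_cancel_left]
  · rw [← hYW d (by omega), sub_self]

theorem yuleWalker_last_row_add_sum (hsym : ∀ j : ℤ, γ (-j) = γ j)
    (hYW0 : γ 0 = (∑ i ∈ Icc 1 p, φ i * γ (i : ℤ)) + σ2)
    (hYW : ∀ j : ℤ, 1 ≤ j → γ j = ∑ i ∈ Icc 1 p, φ i * γ (j - (i : ℤ)))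
    {n : ℕ} (hpn : p ≤ n) (A : Matrix (Fin (n + 1)) (Fin (n + 1)) ℝ)
    (hA : ∀ r : Fin (n + 1), n - p ≤ (r : ℕ) → ∀ j, A r j = γ ((r : ℤ) - j)) :
    A (Fin.last n) + ∑ k ∈ Icc 1 p, (-φ k) • A ⟨n - k, Nat.sub_lt_succ n k⟩
      = σ2 • Pi.single (Fin.last n) 1 := by
  funext j
  have hrow : ∀ k ∈ Icc 1 p, -φ k * A ⟨n - k, Nat.sub_lt_succ n k⟩ j
      = -(φ k * γ ((n - j : ℤ) - k)) := by
    intro k hk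
    rw [mem_Icc] at hk
    have hcast : ((n - k : ℕ) : ℤ) - j = n - j - k := by omega
    rw [hA _ (by simp only; omega), hcast]
    ring
  have hlast := hA (Fin.last n) (by simp only [Fin.val_last]; omega) j
  simp only [Pi.add_apply, Finset.sum_apply, Pi.smul_apply, smul_eq_mul, sum_congr rfl hrow,
    sum_neg_distrib, ← sub_eq_add_neg, hlast, Fin.val_last]
  rw [yuleWalker_sub_sum hsym hYW0 hYW (by omega), Pi.single_apply]
  simp only [sub_eq_zero, mul_ite, mul_one, mul_zero, Fin.ext_iff, Fin.val_last, Nat.cast_inj,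
    eq_comm]

end YuleWalker

/-- Context: AR(p) coefficients `φ`, white-noise variance `σ2`, autocovariance
sequence `γ` satisfying the Yule–Walker equations, and the autocovariance
Toeplitz matrices `Γ m`, assumed positive definite for `m ≥ 1`. -/
theorem stmt_18
    (p : ℕ)
    (φ : ℕ → ℝ)
    (σ2 : ℝ)
    (γ : ℤ → ℝ)
    (hsym : ∀ j : ℤ, γ (-j) = γ j)
    (hYW0 : γ 0 = (∑ i ∈ Finset.Icc 1 p, φ i * γ (i : ℤ)) + σ2)
    (hYW : ∀ j : ℤ, 1 ≤ j → γ j = ∑ i ∈ Finset.Icc 1 p, φ i * γ (j - (i : ℤ)))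
    (Γ : (m : ℕ) → Matrix (Fin m) (Fin m) ℝ)
    (hΓ : ∀ m : ℕ, ∀ i j : Fin m, Γ m i j = γ |(i : ℤ) - (j : ℤ)|)
    (m : ℕ) (hm : 2 * p + 2 ≤ m) (i : ℕ) (hi2 : i ≤ m - p - 1) :
    (Γ m).adjugate ⟨p + i - 1, by omega⟩ ⟨p, by omega⟩
      = σ2 * (Γ (m - 1)).adjugate ⟨p + i - 1, by omega⟩ ⟨p, by omega⟩ := by
  obtain ⟨n, rfl⟩ : ∃ n, m = n + 1 := ⟨m - 1, by omega⟩
  have hγ : ∀ x : ℤ, γ |x| = γ x := fun x => by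
    rcases abs_choice x with h | h <;> simp only [h, hsym]
  have hrows : ∀ r : Fin (n + 1), n - p ≤ (r : ℕ) → ∀ j,
      (Γ (n + 1)).updateRow ⟨p, by omega⟩ (Pi.single ⟨p + i - 1, by omega⟩ 1) r j
        = γ ((r : ℤ) - j) := by
    intro r hr j
    rw [updateRow_ne (by rw [Ne, Fin.ext_iff]; simp only; omega), hΓ, hγ]
  rw [adjugate_apply, adjugate_apply, det_eq_mul_det_submatrix_castSucc _ (Icc 1 p) _
    (fun k hk => by rw [mem_Icc] at hk; simp only [Ne, Fin.ext_iff, Fin.val_last]; omega) _ _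
    (yuleWalker_last_row_add_sum hsym hYW0 hYW (by omega) _ hrows)]
  congr 2
  ext r c
  simp only [submatrix_apply, updateRow_apply, Pi.single_apply, Fin.ext_iff, Fin.val_castSucc, hΓ]
end

section
/- Corner entries of the adjugate: for every integer m with p+2 ≤ m ≤ 2p+1, adj(Γ_m)(m, p+1) = −φ_{m−p−1} · det(Γ_{m−1}), and for every integer m ≥ 2p+2, adj(Γ_m)(m, p+1) = 0, where adj denotes the adjugate (transpose of the cofactor matrix). -/
open Matrix Finset

/-! Let `u ∈ ℝ^{n+1}` be the coefficient vector of the innovation `X_n - ∑_{k=1}^p φ_k X_{n-k}`.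
For `n ≥ p` the Yule–Walker equations say exactly that `Γ_{n+1} u = σ² e_n`: the innovation is
uncorrelated with the past and has variance `σ²`. Applying `adj Γ_{n+1}` gives
`σ² · adj(Γ_{n+1}) e_n = det Γ_{n+1} · u`; the last entry, a principal minor, yields
`det Γ_{n+1} = σ² det Γ_n`, so the last column of `adj Γ_{n+1}` is `det Γ_n · u`. Since the
adjugate is symmetric, its entry `(n, p)` (indices from `0`) is `det Γ_n · u_p`, and
`u_p = -φ_{n-p}` when `n - p ≤ p` and `0` otherwise. -/

namespace Matrix

variable {R : Type*} [CommRing R]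

theorem mul_adjugate_apply_of_mulVec_eq_single {n : Type*} [Fintype n] [DecidableEq n]
    {A : Matrix n n R} {u : n → R} {j : n} {c : R} (h : A *ᵥ u = Pi.single j c) (i : n) :
    c * A.adjugate i j = A.det * u i := by
  have := congrFun (congrArg (A.adjugate *ᵥ ·) h) i
  simp only [mulVec_mulVec, adjugate_mul, smul_mulVec, one_mulVec, mulVec_single] at this
  simpa [mul_comm] using this.symm

theorem adjugate_last_last {k : ℕ} (A : Matrix (Fin (k + 1)) (Fin (k + 1)) R) :
    A.adjugate (Fin.last k) (Fin.last k) = (A.submatrix Fin.castSucc Fin.castSucc).det := by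
  simp [adjugate_fin_succ_eq_det_submatrix, ← two_mul, pow_mul]

end Matrix

section Toeplitz

variable {α : Type*}

def symmToeplitz (γ : ℤ → α) (m : ℕ) : Matrix (Fin m) (Fin m) α :=
  of fun i j => γ |(i : ℤ) - j|

theorem symmToeplitz_isSymm (γ : ℤ → α) (m : ℕ) : (symmToeplitz γ m).IsSymm :=
  IsSymm.ext fun i j => by simp [symmToeplitz, abs_sub_comm]

theorem symmToeplitz_submatrix_castSucc (γ : ℤ → α) (n : ℕ) :
    (symmToeplitz γ (n + 1)).submatrix Fin.castSucc Fin.castSucc = symmToeplitz γ n := by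
  ext i j
  simp [symmToeplitz]

theorem symmToeplitz_apply_of_even {γ : ℤ → α} (hsym : ∀ j : ℤ, γ (-j) = γ j) {m : ℕ}
    (i j : Fin m) : symmToeplitz γ m i j = γ (i - j) := by
  rw [symmToeplitz, of_apply]
  rcases abs_choice ((i : ℤ) - j) with h | h <;> rw [h]
  exact hsym _

end Toeplitz

section YuleWalker

variable {R : Type*} [CommRing R]

def innovationCoeffs (p : ℕ) (φ : ℕ → R) (n : ℕ) : Fin (n + 1) → R :=
  Pi.single (Fin.last n) 1 - ∑ k ∈ Icc 1 p, Pi.single ⟨n - k, by omega⟩ (φ k)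

theorem innovationCoeffs_apply {p n : ℕ} (φ : ℕ → R) (hpn : p ≤ n) (i : Fin (n + 1)) :
    innovationCoeffs p φ n i = if (i : ℕ) = n then 1 else if n - i ≤ p then -φ (n - i) else 0 := by
  have hsingle : ∀ k ∈ Icc 1 p,
      (Pi.single ⟨n - k, by omega⟩ (φ k) : Fin (n + 1) → R) i = if k = n - i then φ k else 0 := by
    intro k hk
    rw [mem_Icc] at hk
    simp only [Pi.single_apply, Fin.ext_iff]
    split_ifs <;> first | rfl | omega
  rw [innovationCoeffs, Pi.sub_apply, Finset.sum_apply, sum_congr rfl hsingle, sum_ite_eq',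
    Pi.single_apply]
  simp only [Fin.ext_iff, Fin.val_last, mem_Icc]
  split_ifs <;> first | omega | ring

variable {p n : ℕ} {φ : ℕ → R} {σ2 : R} {γ : ℤ → R}

theorem symmToeplitz_mulVec_innovationCoeffs (hsym : ∀ j : ℤ, γ (-j) = γ j)
    (hYW0 : γ 0 = (∑ i ∈ Icc 1 p, φ i * γ (i : ℤ)) + σ2)
    (hYW : ∀ j : ℤ, 1 ≤ j → γ j = ∑ i ∈ Icc 1 p, φ i * γ (j - (i : ℤ))) (hpn : p ≤ n) :
    symmToeplitz γ (n + 1) *ᵥ innovationCoeffs p φ n = Pi.single (Fin.last n) σ2 := by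
  funext i
  have hentry : ∀ k ∈ Icc 1 p,
      symmToeplitz γ (n + 1) i ⟨n - k, by omega⟩ * φ k = φ k * γ (n - i - k) := by
    intro k hk
    rw [mem_Icc] at hk
    rw [symmToeplitz_apply_of_even hsym, mul_comm, ← hsym]
    congr 2
    push_cast [Nat.cast_sub (hk.2.trans hpn)]
    ring
  simp only [innovationCoeffs, mulVec_sub, mulVec_sum, mulVec_single, Pi.sub_apply,
    Finset.sum_apply, Pi.smul_apply, col_apply, MulOpposite.smul_eq_mul_unop,
    MulOpposite.unop_op, sum_congr rfl hentry]
  rw [symmToeplitz_apply_of_even hsym, mul_one]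
  rcases eq_or_ne i (Fin.last n) with rfl | hi
  · have hsum : ∀ k ∈ Icc 1 p, φ k * γ (0 - k) = φ k * γ k := fun k _ => by
      rw [zero_sub, hsym]
    rw [Fin.val_last, sub_self, sum_congr rfl hsum, hYW0, Pi.single_eq_same]
    ring
  · have hlt : (i : ℤ) < n := by
      have := Fin.val_lt_last hi
      omega
    rw [← hsym, neg_sub, ← hYW _ (by omega), Fin.val_last, sub_self, Pi.single_eq_of_ne hi]

theorem det_symmToeplitz_succ (hsym : ∀ j : ℤ, γ (-j) = γ j)
    (hYW0 : γ 0 = (∑ i ∈ Icc 1 p, φ i * γ (i : ℤ)) + σ2)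
    (hYW : ∀ j : ℤ, 1 ≤ j → γ j = ∑ i ∈ Icc 1 p, φ i * γ (j - (i : ℤ))) (hpn : p ≤ n) :
    (symmToeplitz γ (n + 1)).det = σ2 * (symmToeplitz γ n).det := by
  have h := mul_adjugate_apply_of_mulVec_eq_single
    (symmToeplitz_mulVec_innovationCoeffs hsym hYW0 hYW hpn) (Fin.last n)
  rw [adjugate_last_last, symmToeplitz_submatrix_castSucc, innovationCoeffs_apply φ hpn,
    if_pos (Fin.val_last n), mul_one] at h
  exact h.symm

theorem adjugate_symmToeplitz_apply_last [IsDomain R] (hσ : σ2 ≠ 0)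
    (hsym : ∀ j : ℤ, γ (-j) = γ j)
    (hYW0 : γ 0 = (∑ i ∈ Icc 1 p, φ i * γ (i : ℤ)) + σ2)
    (hYW : ∀ j : ℤ, 1 ≤ j → γ j = ∑ i ∈ Icc 1 p, φ i * γ (j - (i : ℤ))) (hpn : p ≤ n)
    (i : Fin (n + 1)) :
    (symmToeplitz γ (n + 1)).adjugate i (Fin.last n) =
      (symmToeplitz γ n).det * innovationCoeffs p φ n i := by
  apply mul_left_cancel₀ hσ
  rw [mul_adjugate_apply_of_mulVec_eq_single
    (symmToeplitz_mulVec_innovationCoeffs hsym hYW0 hYW hpn),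
    det_symmToeplitz_succ hsym hYW0 hYW hpn, mul_assoc]

end YuleWalker

/-- Context: AR(p) coefficients `φ`, white-noise variance `σ2`, autocovariance
sequence `γ` satisfying the Yule–Walker equations, and the autocovariance
Toeplitz matrices `Γ m`, assumed positive definite for `m ≥ 1`. -/
theorem stmt_19
    (p : ℕ)
    (φ : ℕ → ℝ)
    (σ2 : ℝ) (hσ : 0 < σ2)
    (γ : ℤ → ℝ)
    (hsym : ∀ j : ℤ, γ (-j) = γ j)
    (hYW0 : γ 0 = (∑ i ∈ Finset.Icc 1 p, φ i * γ (i : ℤ)) + σ2)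
    (hYW : ∀ j : ℤ, 1 ≤ j → γ j = ∑ i ∈ Finset.Icc 1 p, φ i * γ (j - (i : ℤ)))
    (Γ : (m : ℕ) → Matrix (Fin m) (Fin m) ℝ)
    (hΓ : ∀ m : ℕ, ∀ i j : Fin m, Γ m i j = γ |(i : ℤ) - (j : ℤ)|)
    :
    (∀ (m : ℕ) (hm1 : p + 2 ≤ m) (hm2 : m ≤ 2 * p + 1),
      (Γ m).adjugate ⟨m - 1, by omega⟩ ⟨p, by omega⟩ = -(φ (m - p - 1)) * (Γ (m - 1)).det) ∧
    (∀ (m : ℕ) (hm : 2 * p + 2 ≤ m),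
      (Γ m).adjugate ⟨m - 1, by omega⟩ ⟨p, by omega⟩ = 0) := by
  obtain rfl : Γ = symmToeplitz γ := funext fun m => ext (hΓ m)
  have hcorner : ∀ n (hpn : p < n), (symmToeplitz γ (n + 1)).adjugate (Fin.last n) ⟨p, by omega⟩ =
      (symmToeplitz γ n).det * if n - p ≤ p then -φ (n - p) else 0 := fun n hpn => by
    rw [← (symmToeplitz_isSymm γ _).adjugate.apply,
      adjugate_symmToeplitz_apply_last hσ.ne' hsym hYW0 hYW hpn.le, innovationCoeffs_apply φ hpn.le,
      if_neg hpn.ne]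
  refine ⟨fun m hm1 hm2 => ?_, fun m hm => ?_⟩
  all_goals
    obtain ⟨n, rfl⟩ : ∃ n, m = n + 1 := ⟨m - 1, by omega⟩
    have hlast : (⟨n + 1 - 1, by omega⟩ : Fin (n + 1)) = Fin.last n := Fin.ext (by simp)
    rw [hlast, hcorner n (by omega)]
  · rw [if_pos (by omega), Nat.add_sub_cancel, show n + 1 - p - 1 = n - p by omega]
    ring
  · rw [if_neg (by omega), mul_zero]
end
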